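/- arXiv:1403.4682 — 3 statements merged into one kernel-verified Lean document; each statement's English description precedes it below -/
import Mathlib

section
/- Let M ∈ ℝ^{L×K} be arbitrary, and let A ∈ ℝ^{K×N} have strictly positive entries. Then for any C ∈ ℝ^{K×N}, ∑_{k,n} ((MᵀM A)_{kn} / A_{kn}) · C_{kn}² ≥ Tr(Cᵀ MᵀM C), provided MᵀM has nonnegative entries (e.g., M has nonnegative entries). -/
/-!
Column by column, the claim is `cᵀ B c ≤ ∑ₖ (B a)ₖ / aₖ · cₖ²` for the symmetric, entrywise
nonnegative matrix `B = MᵀM` and a positive vector `a`. Each cross term is bounded by the weighted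
AM-GM inequality `2 cₖ cⱼ ≤ (aⱼ / aₖ) cₖ² + (aₖ / aⱼ) cⱼ²`; weighting by `Bₖⱼ ≥ 0` and summing,
the two halves of the right-hand side coincide by the symmetry of `B`.
-/

open Matrix Finset

lemma two_mul_mul_le_div_mul_sq_add_div_mul_sq {a b : ℝ} (ha : 0 < a) (hb : 0 < b) (x y : ℝ) :
    2 * (x * y) ≤ b / a * x ^ 2 + a / b * y ^ 2 := by
  have key : 2 * (x * y) * (a * b) ≤ b ^ 2 * x ^ 2 + a ^ 2 * y ^ 2 := by
    nlinarith [sq_nonneg (b * x - a * y)]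
  calc 2 * (x * y) = 2 * (x * y) * (a * b) / (a * b) := by field_simp
    _ ≤ (b ^ 2 * x ^ 2 + a ^ 2 * y ^ 2) / (a * b) := by gcongr
    _ = b / a * x ^ 2 + a / b * y ^ 2 := by field_simp

lemma Matrix.IsSymm.dotProduct_mulVec_le_sum_div_mul_sq {ι : Type*} [Fintype ι]
    {B : Matrix ι ι ℝ} (hB : B.IsSymm) (hB₀ : ∀ i j, 0 ≤ B i j)
    {a : ι → ℝ} (ha : ∀ i, 0 < a i) (c : ι → ℝ) :
    c ⬝ᵥ B *ᵥ c ≤ ∑ i, (B *ᵥ a) i / a i * c i ^ 2 := by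
  set S := ∑ i, ∑ j, B i j * (a j / a i * c i ^ 2)
  have hrhs : ∑ i, (B *ᵥ a) i / a i * c i ^ 2 = S := by
    refine sum_congr rfl fun i _ => ?_
    simp only [mulVec, dotProduct, sum_div, sum_mul]
    exact sum_congr rfl fun j _ => by ring
  have hswap : ∑ i, ∑ j, B i j * (a i / a j * c j ^ 2) = S := by
    rw [sum_comm]
    exact sum_congr rfl fun i _ => sum_congr rfl fun j _ => by rw [hB.apply]
  have hlhs : 2 * (c ⬝ᵥ B *ᵥ c) = ∑ i, ∑ j, B i j * (2 * (c i * c j)) := by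
    simp only [mulVec, dotProduct, mul_sum]
    exact sum_congr rfl fun i _ => sum_congr rfl fun j _ => by ring
  have hpair : 2 * (c ⬝ᵥ B *ᵥ c) ≤ 2 * S := by
    calc 2 * (c ⬝ᵥ B *ᵥ c)
        ≤ ∑ i, ∑ j, B i j * (a j / a i * c i ^ 2 + a i / a j * c j ^ 2) := by
          rw [hlhs]
          gcongr with i _ j _
          · exact hB₀ i j
          · exact two_mul_mul_le_div_mul_sq_add_div_mul_sq (ha i) (ha j) _ _
      _ = S + ∑ i, ∑ j, B i j * (a i / a j * c j ^ 2) := by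
          simp only [mul_add, sum_add_distrib, S]
      _ = 2 * S := by rw [hswap]; ring
  rw [hrhs]
  linarith

lemma Matrix.trace_transpose_mul_mul_eq_sum_dotProduct_mulVec {ι κ R : Type*} [Fintype ι]
    [Fintype κ] [CommSemiring R] (B : Matrix ι ι R) (C : Matrix ι κ R) :
    trace (Cᵀ * B * C) = ∑ n, Cᵀ n ⬝ᵥ B *ᵥ Cᵀ n := by
  simp only [trace, diag, mul_apply, mulVec, dotProduct, transpose_apply, sum_mul, mul_sum]
  refine sum_congr rfl fun n _ => ?_
  rw [sum_comm]
  exact sum_congr rfl fun i _ => sum_congr rfl fun j _ => by ring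

theorem auxiliary_first_term_bound
    (L K N : ℕ) (M : Matrix (Fin L) (Fin K) ℝ)
    (hM : ∀ l k, 0 ≤ M l k)
    (A : Matrix (Fin K) (Fin N) ℝ) (hA : ∀ k n, 0 < A k n)
    (C : Matrix (Fin K) (Fin N) ℝ) :
    Matrix.trace (Cᵀ * (Mᵀ * M) * C)
      ≤ ∑ k, ∑ n, ((Mᵀ * M * A) k n / A k n) * (C k n) ^ 2 := by
  have hB : (Mᵀ * M).IsSymm := by rw [IsSymm, transpose_mul, transpose_transpose]
  have hB₀ : ∀ k j, 0 ≤ (Mᵀ * M) k j := fun k j => by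
    simpa only [mul_apply, transpose_apply] using
      sum_nonneg fun l _ => mul_nonneg (hM l k) (hM l j)
  rw [trace_transpose_mul_mul_eq_sum_dotProduct_mulVec, sum_comm]
  exact sum_le_sum fun n _ =>
    hB.dotProduct_mulVec_le_sum_div_mul_sq hB₀ (fun k => hA k n) (Cᵀ n)
end

section
/- Let S ∈ ℝ^{K×K} be a symmetric matrix with nonnegative entries and let A ∈ ℝ^{K×N} have strictly positive entries. Then for any C ∈ ℝ^{K×N}: ∑_{k,n} (S A)_{kn}/A_{kn} · C_{kn}² − ∑_{k,l,n} C_{kn} C_{ln} S_{lk} = (1/2) ∑_{k,l,n} S_{kl} (A_{ln} C_{kn} − A_{kn} C_{ln})² / (A_{kn} A_{ln}) ≥ 0. -/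
/-!
Expanding the square, each summand on the right equals
`S k l * (A l n / A k n * C k n ^ 2 + A k n / A l n * C l n ^ 2 - 2 * C k n * C l n)`.
By the symmetry of `S`, exchanging `k` and `l` shows that the two diagonal parts contribute the
same amount, namely `∑ k n, (S * A) k n / A k n * C k n ^ 2`; this gives the identity. Every
summand on the right is nonnegative when `S ≥ 0` and `A > 0`.
-/

open Matrix BigOperators Finset

variable {ι ν : Type*} [Fintype ι] [Fintype ν]

lemma mul_sq_sub_div_mul_eq {s a b x y : ℝ} (ha : a ≠ 0) (hb : b ≠ 0) :
    s * (b * x - a * y) ^ 2 / (a * b)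
      = s * b / a * x ^ 2 + s * a / b * y ^ 2 - 2 * (s * (x * y)) := by
  field_simp
  ring

lemma sum_sum_mul_apply_div_mul_sq (S : Matrix ι ι ℝ) (A C : Matrix ι ν ℝ) :
    ∑ k, ∑ n, (S * A) k n / A k n * C k n ^ 2
      = ∑ k, ∑ l, ∑ n, S k l * A l n / A k n * C k n ^ 2 := by
  refine sum_congr rfl fun k _ => ?_
  simp only [mul_apply, sum_div, sum_mul]
  exact sum_comm

lemma Matrix.IsSymm.sum_sum_mul_apply_div_mul_sq_sub_eq {S : Matrix ι ι ℝ} (hS : S.IsSymm)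
    {A : Matrix ι ν ℝ} (hA : ∀ k n, A k n ≠ 0) (C : Matrix ι ν ℝ) :
    ∑ k, ∑ n, (S * A) k n / A k n * C k n ^ 2 - ∑ k, ∑ l, ∑ n, C k n * C l n * S l k
      = (1 / 2 : ℝ) * ∑ k, ∑ l, ∑ n,
          S k l * (A l n * C k n - A k n * C l n) ^ 2 / (A k n * A l n) := by
  have h_swap : ∑ k, ∑ l, ∑ n, S k l * A k n / A l n * C l n ^ 2
      = ∑ k, ∑ l, ∑ n, S k l * A l n / A k n * C k n ^ 2 := by
    rw [sum_comm]
    simp only [hS.apply]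
  have h_cross : ∑ k, ∑ l, ∑ n, C k n * C l n * S l k
      = ∑ k, ∑ l, ∑ n, S k l * (C k n * C l n) := by
    simp only [hS.apply, mul_comm (S _ _)]
  rw [sum_sum_mul_apply_div_mul_sq, h_cross]
  simp only [mul_sq_sub_div_mul_eq (hA _ _) (hA _ _), sum_sub_distrib, sum_add_distrib,
    ← mul_sum]
  rw [h_swap]
  ring

lemma sum_sum_sum_mul_sq_sub_div_mul_nonneg {S : Matrix ι ι ℝ} (hS : ∀ k l, 0 ≤ S k l)
    {A : Matrix ι ν ℝ} (hA : ∀ k n, 0 < A k n) (C : Matrix ι ν ℝ) :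
    0 ≤ ∑ k, ∑ l, ∑ n, S k l * (A l n * C k n - A k n * C l n) ^ 2 / (A k n * A l n) :=
  sum_nonneg fun k _ => sum_nonneg fun l _ => sum_nonneg fun n _ =>
    div_nonneg (mul_nonneg (hS k l) (sq_nonneg _)) (mul_pos (hA k n) (hA l n)).le

theorem auxiliary_symmetric_term_identity
    (K N : ℕ) (S : Matrix (Fin K) (Fin K) ℝ)
    (hsym : S.IsSymm) (hnn : ∀ k l, 0 ≤ S k l)
    (A : Matrix (Fin K) (Fin N) ℝ) (hA : ∀ k n, 0 < A k n)
    (C : Matrix (Fin K) (Fin N) ℝ) :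
    (∑ k, ∑ n, ((S * A) k n / A k n) * (C k n) ^ 2
        - ∑ k, ∑ l, ∑ n, C k n * C l n * S l k
      = (1 / 2 : ℝ) * ∑ k, ∑ l, ∑ n,
          S k l * (A l n * C k n - A k n * C l n) ^ 2 / (A k n * A l n))
    ∧ 0 ≤ ∑ k, ∑ n, ((S * A) k n / A k n) * (C k n) ^ 2
        - ∑ k, ∑ l, ∑ n, C k n * C l n * S l k := by
  have h_eq := hsym.sum_sum_mul_apply_div_mul_sq_sub_eq (fun k n => (hA k n).ne') C
  refine ⟨h_eq, ?_⟩
  rw [h_eq]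
  exact mul_nonneg (by norm_num) (sum_sum_sum_mul_sq_sub_div_mul_nonneg hnn hA C)
end

section
/- Fix A' ∈ ℝ^{K×N} with strictly positive entries and let G(A, A') = F(A') + Tr(Cᵀ∇F(A')) + (1/2)∑_{k,n} Q_{kn} C_{kn}² where C = A − A' and Q_{kn} = ((MᵀM A' + λ A' D + α·J)_{kn}) / A'_{kn}, with all Q_{kn} > 0. Then the unique minimizer of G(·, A') over ℝ^{K×N} is given entrywise by A_{kn} = A'_{kn} · (MᵀY + λ A' W)_{kn} / (MᵀM A' + λ A' D + α)_{kn}, i.e., the multiplicative update rule. -/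
/-!
Since `L = D - W`, the gradient splits as `∇F(A') = P - S` with `P = MᵀMA' + λA'D + αJ` and
`S = MᵀY + λA'W`; as `Q = P / A'` and `Anew = A' S / P` entrywise, this says
`∇F(A') = Q ⊙ (A' - Anew)`. Completing the square then gives
`G(B) = G(Anew) + ½ ∑ Q (B - Anew)²`, and `Q > 0` makes `Anew` the unique minimizer.
-/

open Matrix Finset

section QuadraticModel

variable {m n : Type*} [Fintype m] [Fintype n]

theorem Matrix.trace_transpose_mul_eq_sum (X Y : Matrix m n ℝ) :
    trace (Xᵀ * Y) = ∑ i, ∑ j, X i j * Y i j := by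
  simp only [trace_mul_comm Xᵀ, ← sum_hadamard_eq, hadamard_apply, mul_comm]

theorem sum_sum_mul_sq_eq_zero_iff {q X : Matrix m n ℝ} (hq : ∀ i j, 0 < q i j) :
    ∑ i, ∑ j, q i j * X i j ^ 2 = 0 ↔ X = 0 := by
  have hnonneg : ∀ i j, 0 ≤ q i j * X i j ^ 2 := fun i j => by have := hq i j; positivity
  refine ⟨fun h => ?_, by rintro rfl; simp⟩
  ext i j
  have hi := (sum_eq_zero_iff_of_nonneg fun i _ => sum_nonneg fun j _ => hnonneg i j).mp h i
    (mem_univ i)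
  have hij := (sum_eq_zero_iff_of_nonneg fun j _ => hnonneg i j).mp hi j (mem_univ j)
  simpa [(hq i j).ne'] using hij

/-- The auxiliary function `G(·, x₀)` of the paper: gradient `g` at `x₀`, diagonal curvature `q`. -/
noncomputable def separableQuadratic (c : ℝ) (x₀ g q x : Matrix m n ℝ) : ℝ :=
  c + trace ((x - x₀)ᵀ * g) + 1 / 2 * ∑ i, ∑ j, q i j * (x - x₀) i j ^ 2

theorem separableQuadratic_eq_add {c : ℝ} {x₀ g q xmin : Matrix m n ℝ}
    (hg : ∀ i j, g i j = q i j * (x₀ i j - xmin i j)) (x : Matrix m n ℝ) :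
    separableQuadratic c x₀ g q x
      = separableQuadratic c x₀ g q xmin + 1 / 2 * ∑ i, ∑ j, q i j * (x - xmin) i j ^ 2 := by
  simp only [separableQuadratic, trace_transpose_mul_eq_sum, mul_sum, add_assoc, add_right_inj,
    ← sum_add_distrib]
  refine sum_congr rfl fun i _ => sum_congr rfl fun j _ => ?_
  simp only [Matrix.sub_apply, hg]
  ring

theorem separableQuadratic_le {c : ℝ} {x₀ g q xmin : Matrix m n ℝ} (hq : ∀ i j, 0 < q i j)
    (hg : ∀ i j, g i j = q i j * (x₀ i j - xmin i j)) (x : Matrix m n ℝ) :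
    separableQuadratic c x₀ g q xmin ≤ separableQuadratic c x₀ g q x := by
  rw [separableQuadratic_eq_add hg x, le_add_iff_nonneg_right]
  have hnonneg : ∀ i j, 0 ≤ q i j * (x - xmin) i j ^ 2 := fun i j => by
    have := hq i j; positivity
  exact mul_nonneg (by norm_num) (sum_nonneg fun i _ => sum_nonneg fun j _ => hnonneg i j)

theorem eq_of_separableQuadratic_eq {c : ℝ} {x₀ g q xmin x : Matrix m n ℝ}
    (hq : ∀ i j, 0 < q i j) (hg : ∀ i j, g i j = q i j * (x₀ i j - xmin i j))
    (h : separableQuadratic c x₀ g q x = separableQuadratic c x₀ g q xmin) : x = xmin := by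
  rw [separableQuadratic_eq_add hg x, add_eq_left, mul_eq_zero, sum_sum_mul_sq_eq_zero_iff hq,
    sub_eq_zero] at h
  exact h.resolve_left (by norm_num)

end QuadraticModel

theorem sub_eq_div_mul_sub_mul_div {a p : ℝ} (ha : a ≠ 0) (hp : p ≠ 0) (s : ℝ) :
    p - s = p / a * (a - a * s / p) := by
  field_simp

theorem multiplicative_update_minimizes_auxiliary_general
    (Ldim K N : ℕ)
    (Y : Matrix (Fin Ldim) (Fin N) ℝ)
    (M : Matrix (Fin Ldim) (Fin K) ℝ)
    (W : Matrix (Fin N) (Fin N) ℝ)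
    (D : Matrix (Fin N) (Fin N) ℝ)
    (L : Matrix (Fin N) (Fin N) ℝ) (hL : L = D - W)
    (lam alpha : ℝ)
    (A' : Matrix (Fin K) (Fin N) ℝ) (hA' : ∀ k n, 0 < A' k n)
    (J : Matrix (Fin K) (Fin N) ℝ)
    (FA' : ℝ)
    (gradFA' : Matrix (Fin K) (Fin N) ℝ)
    (hgrad : gradFA' = Mᵀ * M * A' - Mᵀ * Y + lam • (A' * L) + alpha • J)
    (Q : Matrix (Fin K) (Fin N) ℝ)
    (hQ : ∀ k n, Q k n = (Mᵀ * M * A' + lam • (A' * D) + alpha • J) k n / A' k n)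
    (hden : ∀ k n, 0 < (Mᵀ * M * A' + lam • (A' * D) + alpha • J) k n)
    (G : Matrix (Fin K) (Fin N) ℝ → ℝ)
    (hG : ∀ B, G B = FA' + Matrix.trace ((B - A')ᵀ * gradFA')
        + (1 / 2 : ℝ) * ∑ k, ∑ n, Q k n * ((B - A') k n) ^ 2)
    (Anew : Matrix (Fin K) (Fin N) ℝ)
    (hAnew : ∀ k n, Anew k n = A' k n * (Mᵀ * Y + lam • (A' * W)) k n
        / (Mᵀ * M * A' + lam • (A' * D) + alpha • J) k n) :
    ∀ B : Matrix (Fin K) (Fin N) ℝ, G Anew ≤ G B ∧ (G B = G Anew → B = Anew) := by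
  have hgrad_split : gradFA' = (Mᵀ * M * A' + lam • (A' * D) + alpha • J)
      - (Mᵀ * Y + lam • (A' * W)) := by
    rw [hgrad, hL, Matrix.mul_sub, smul_sub]
    abel
  have hg : ∀ k n, gradFA' k n = Q k n * (A' k n - Anew k n) := fun k n => by
    rw [hgrad_split, Matrix.sub_apply, hQ, hAnew]
    exact sub_eq_div_mul_sub_mul_div (hA' k n).ne' (hden k n).ne' _
  have hQpos : ∀ k n, 0 < Q k n := fun k n => hQ k n ▸ div_pos (hden k n) (hA' k n)
  rw [show G = separableQuadratic FA' A' gradFA' Q from funext hG]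
  exact fun B => ⟨separableQuadratic_le hQpos hg B, eq_of_separableQuadratic_eq hQpos hg⟩

theorem multiplicative_update_minimizes_auxiliary
    (Ldim K N : ℕ)
    (Y : Matrix (Fin Ldim) (Fin N) ℝ) (hY : ∀ l n, 0 ≤ Y l n)
    (M : Matrix (Fin Ldim) (Fin K) ℝ) (hM : ∀ l k, 0 ≤ M l k)
    (W : Matrix (Fin N) (Fin N) ℝ) (hWsym : W.IsSymm) (hWnn : ∀ i j, 0 ≤ W i j)
    (D : Matrix (Fin N) (Fin N) ℝ) (hD : D = Matrix.diagonal (fun n => ∑ m, W m n))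
    (L : Matrix (Fin N) (Fin N) ℝ) (hL : L = D - W)
    (lam alpha : ℝ) (hlam : 0 < lam) (halpha : 0 < alpha)
    (A' : Matrix (Fin K) (Fin N) ℝ) (hA' : ∀ k n, 0 < A' k n)
    (J : Matrix (Fin K) (Fin N) ℝ) (hJ : J = Matrix.of fun _ _ => (1 : ℝ))
    (FA' : ℝ)
    (gradFA' : Matrix (Fin K) (Fin N) ℝ)
    (hgrad : gradFA' = Mᵀ * M * A' - Mᵀ * Y + lam • (A' * L) + alpha • J)
    (Q : Matrix (Fin K) (Fin N) ℝ)
    (hQ : ∀ k n, Q k n = (Mᵀ * M * A' + lam • (A' * D) + alpha • J) k n / A' k n)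
    (hQpos : ∀ k n, 0 < Q k n)
    (hden : ∀ k n, 0 < (Mᵀ * M * A' + lam • (A' * D) + alpha • J) k n)
    (G : Matrix (Fin K) (Fin N) ℝ → ℝ)
    (hG : ∀ B, G B = FA' + Matrix.trace ((B - A')ᵀ * gradFA')
        + (1 / 2 : ℝ) * ∑ k, ∑ n, Q k n * ((B - A') k n) ^ 2)
    (Anew : Matrix (Fin K) (Fin N) ℝ)
    (hAnew : ∀ k n, Anew k n = A' k n * (Mᵀ * Y + lam • (A' * W)) k n
        / (Mᵀ * M * A' + lam • (A' * D) + alpha • J) k n) :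
    ∀ B : Matrix (Fin K) (Fin N) ℝ, G Anew ≤ G B ∧ (G B = G Anew → B = Anew) :=
  multiplicative_update_minimizes_auxiliary_general Ldim K N Y M W D L hL lam alpha A' hA' J FA'
    gradFA' hgrad Q hQ hden G hG Anew hAnew
end
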